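/- arXiv:2502.08935 — 3 statements merged into one kernel-verified Lean document; each statement's English description precedes it below -/
import Mathlib

section
/- Suppose P and Π are symmetric n×n real matrices such that R + DᵀPD is invertible, and set Θ* = −(R + DᵀPD)⁻¹(BᵀP + DᵀPC + S) and Θ̄* = −(R + DᵀPD)⁻¹(BᵀΠ + DᵀP(C+C̄) + S). Assume that A + BΘ* and A + Ā + BΘ̄* are Hurwitz. Then there exist a unique n×n real matrix P₁, unique vectors p, p₁ ∈ ℝⁿ, and a unique real number c₀ satisfying: (i) (A + BΘ*)ᵀP₁ + P₁(A + Ā + BΘ̄*) + CᵀP(C + C̄) + Q − PBΘ̄* + (Θ*)ᵀ(DᵀPC + DᵀPC̄ + S) = 0; (ii) (A + Ā + BΘ̄*)ᵀp + (C + C̄ + DΘ̄*)ᵀPσ + (Θ̄*)ᵀr + Πb + q = 0; (iii) with θ* := −(R + DᵀPD)⁻¹(Bᵀp + DᵀPσ + r), (A + BΘ*)ᵀp₁ + Pb + CᵀPσ + q + (P₁ − P)(Bθ* + b) + (Θ̄*)ᵀ(DᵀPσ + r) = 0; (iv) c₀ = 2pᵀb + σᵀPσ − (Bᵀp + DᵀPσ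 + r)ᵀ(R + DᵀPD)⁻¹(Bᵀp + DᵀPσ + r). -/
/-
Equations (i)–(iv) form a triangular system: (i) involves only `P₁`, (ii) only `p`, (iii) is
linear in `p₁` once `P₁, p` are known, and (iv) defines `c₀`. The operators acting on the new
unknown are `X ↦ MᵀX + XN`, `(A + Ā + BΘ̄*)ᵀ` and `(A + BΘ*)ᵀ`, where `M = A + BΘ*` and
`N = A + Ā + BΘ̄*`. The last two are invertible because `0` is not an eigenvalue of a Hurwitz
matrix. The Sylvester operator is injective, hence bijective, since `σ(Mᵀ) = σ(M)` lies in
`Re < 0` and `σ(-N)` in `Re > 0`: if `AX = XB` with `σ(A) ∩ σ(B) = ∅`, then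
`0 = X χ_B(B) = χ_B(A) X` and `χ_B(A)` is invertible by spectral mapping.
-/

open Matrix

/-- A real square matrix is Hurwitz if every eigenvalue of it, regarded as a complex
matrix, has negative real part. -/
def IsHurwitz {k : ℕ} (M : Matrix (Fin k) (Fin k) ℝ) : Prop :=
  ∀ z ∈ spectrum ℂ (M.map (algebraMap ℝ ℂ)), z.re < 0

theorem Function.Bijective.existsUnique_eq_zero_of_eq_add {E F : Type*} [Zero E] [AddGroup F]
    {f g : E → F} (hf : Function.Bijective f) (hg : ∀ x, g x = f x + g 0) :
    ∃! x, g x = 0 :=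
  (existsUnique_congr fun x => by rw [hg x, add_eq_zero_iff_eq_neg]).mpr (hf.existsUnique _)

theorem existsUnique_prod_of_existsUnique {α β : Type*} {r : α × β → Prop} {p : α → Prop}
    {q : α → β → Prop} (hp : ∃! a, p a) (hq : ∀ a, p a → ∃! b, q a b)
    (hr : ∀ a b, r (a, b) ↔ p a ∧ q a b := by intro _ _; dsimp only; exact Iff.rfl) :
    ∃! x : α × β, r x := by
  obtain ⟨a, ha, ha_unique⟩ := hp
  obtain ⟨b, hb, hb_unique⟩ := hq a ha
  refine ⟨(a, b), (hr a b).mpr ⟨ha, hb⟩, fun ⟨a', b'⟩ h => ?_⟩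
  obtain ⟨ha', hb'⟩ := (hr a' b').mp h
  obtain rfl := ha_unique a' ha'
  rw [hb_unique b' hb']

namespace Matrix

variable {ι κ : Type*} [Fintype ι] [Fintype κ]

theorem spectrum_transpose {R : Type*} [CommRing R] [DecidableEq ι] (A : Matrix ι ι R) :
    spectrum R Aᵀ = spectrum R A := by
  ext r
  simp only [mem_spectrum_iff_not_isUnit_eval_charpoly, charpoly_transpose]

theorem aeval_mul_eq_mul_aeval {R : Type*} [CommRing R] [DecidableEq ι] [DecidableEq κ]
    {A : Matrix ι ι R} {B : Matrix κ κ R} {X : Matrix ι κ R} (h : A * X = X * B)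
    (p : Polynomial R) : Polynomial.aeval A p * X = X * Polynomial.aeval B p := by
  induction p using Polynomial.induction_on' with
  | add p q hp hq => rw [map_add, map_add, Matrix.add_mul, Matrix.mul_add, hp, hq]
  | monomial j r =>
    have hpow : A ^ j * X = X * B ^ j := by
      induction j with
      | zero => rw [pow_zero, pow_zero, Matrix.one_mul, Matrix.mul_one]
      | succ j ih => rw [pow_succ, Matrix.mul_assoc, h, ← Matrix.mul_assoc, ih,
          Matrix.mul_assoc, ← pow_succ]
    simp only [Polynomial.aeval_monomial, Algebra.algebraMap_eq_smul_one, Matrix.smul_mul,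
      Matrix.mul_smul, Matrix.one_mul, hpow]

theorem eq_zero_of_mul_eq_mul_of_disjoint_spectrum {K : Type*} [Field K] [IsAlgClosed K]
    [DecidableEq ι] [DecidableEq κ] {A : Matrix ι ι K} {B : Matrix κ κ K} {X : Matrix ι κ K}
    (h : A * X = X * B) (hAB : Disjoint (spectrum K A) (spectrum K B)) : X = 0 := by
  cases isEmpty_or_nonempty κ
  · exact Subsingleton.elim _ _
  set T := Polynomial.aeval A B.charpoly
  have hTX : T * X = 0 := by
    rw [aeval_mul_eq_mul_aeval h, aeval_self_charpoly, Matrix.mul_zero]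
  -- Spectral mapping: `σ(χ_B(A)) = χ_B(σ(A))`, and `χ_B` vanishes only on `σ(B)`.
  have hT : IsUnit T.det := by
    have hdeg : 0 < B.charpoly.degree := by
      rw [charpoly_degree_eq_dim]
      exact_mod_cast Fintype.card_pos
    rw [← isUnit_iff_isUnit_det, ← not_not (a := IsUnit T), ← spectrum.zero_mem_iff K,
      spectrum.map_polynomial_aeval_of_degree_pos A _ hdeg]
    rintro ⟨μ, hμA, hμB⟩
    exact hAB.ne_of_mem hμA (mem_spectrum_iff_isRoot_charpoly.mpr hμB) rfl
  calc X = (T⁻¹ * T) * X := by rw [nonsing_inv_mul T hT, Matrix.one_mul]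
    _ = 0 := by rw [Matrix.mul_assoc, hTX, Matrix.mul_zero]

@[simps]
def sylvesterMap (R : Type*) [CommRing R] (A : Matrix ι ι R) (B : Matrix κ κ R) :
    Matrix ι κ R →ₗ[R] Matrix ι κ R where
  toFun X := A * X + X * B
  map_add' X Y := by simp only [Matrix.mul_add, Matrix.add_mul]; abel
  map_smul' c X := by simp only [Matrix.mul_smul, Matrix.smul_mul, smul_add, RingHom.id_apply]

theorem sylvesterMap_bijective_of_disjoint_spectrum_map {K L : Type*} [Field K] [Field L]
    [IsAlgClosed L] [Algebra K L] [DecidableEq ι] [DecidableEq κ]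
    {A : Matrix ι ι K} {B : Matrix κ κ K}
    (hAB : Disjoint (spectrum L (A.map (algebraMap K L)))
      (spectrum L (-B.map (algebraMap K L)))) :
    Function.Bijective (sylvesterMap K A B) := by
  have hinj : Function.Injective (sylvesterMap K A B) := by
    rw [← LinearMap.ker_eq_bot, LinearMap.ker_eq_bot']
    intro X hX
    have hXL : A.map (algebraMap K L) * X.map (algebraMap K L)
        = X.map (algebraMap K L) * -B.map (algebraMap K L) := by
      have hmap := congrArg (Matrix.map · (algebraMap K L)) hX
      simp only [sylvesterMap_apply, Matrix.map_add _ (map_add _), Matrix.map_mul,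
        Matrix.map_zero _ (map_zero _)] at hmap
      rw [Matrix.mul_neg, ← add_eq_zero_iff_eq_neg, hmap]
    exact map_injective (FaithfulSMul.algebraMap_injective K L) <|
      (eq_zero_of_mul_eq_mul_of_disjoint_spectrum hXL hAB).trans
        (Matrix.map_zero _ (map_zero _)).symm
  exact ⟨hinj, LinearMap.injective_iff_surjective.mp hinj⟩

end Matrix

theorem IsHurwitz.isUnit {k : ℕ} {M : Matrix (Fin k) (Fin k) ℝ} (hM : IsHurwitz M) :
    IsUnit M := by
  have hMC : IsUnit (M.map (algebraMap ℝ ℂ)) := by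
    by_contra h
    simpa using hM 0 ((spectrum.zero_mem_iff ℂ).mpr h)
  rw [isUnit_iff_isUnit_det, ← RingHom.mapMatrix_apply, ← RingHom.map_det] at hMC
  exact isUnit_iff_isUnit_det M |>.mpr ((isUnit_map_iff _ _).mp hMC)

theorem IsHurwitz.sylvesterMap_transpose_bijective {k : ℕ} {M N : Matrix (Fin k) (Fin k) ℝ}
    (hM : IsHurwitz M) (hN : IsHurwitz N) : Function.Bijective (sylvesterMap ℝ Mᵀ N) := by
  refine sylvesterMap_bijective_of_disjoint_spectrum_map (L := ℂ) ?_
  rw [transpose_map, spectrum_transpose, ← spectrum.neg_eq]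
  refine Set.disjoint_left.mpr fun μ hμM hμN => ?_
  have hμ_pos : 0 < μ.re := by simpa using hN (-μ) hμN
  exact lt_asymm (hM μ hμM) hμ_pos

theorem IsHurwitz.mulVec_transpose_bijective {k : ℕ} {N : Matrix (Fin k) (Fin k) ℝ}
    (hN : IsHurwitz N) : Function.Bijective Nᵀ.mulVec :=
  ⟨mulVec_injective_iff_isUnit.mpr ((isUnit_transpose _).mpr hN.isUnit),
    mulVec_surjective_iff_isUnit.mpr ((isUnit_transpose _).mpr hN.isUnit)⟩

theorem linear_system_unique_solution_general {n m : ℕ}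
    (A Abar C Cbar Q : Matrix (Fin n) (Fin n) ℝ)
    (B D : Matrix (Fin n) (Fin m) ℝ)
    (S : Matrix (Fin m) (Fin n) ℝ) (R : Matrix (Fin m) (Fin m) ℝ)
    (b sig qv : Fin n → ℝ) (rv : Fin m → ℝ)
    (P Pi0 : Matrix (Fin n) (Fin n) ℝ)
    (Th Thb : Matrix (Fin m) (Fin n) ℝ)
    (hH1 : IsHurwitz (A + B * Th)) (hH2 : IsHurwitz (A + Abar + B * Thb)) :
    ∃! w : Matrix (Fin n) (Fin n) ℝ × (Fin n → ℝ) × (Fin n → ℝ) × ℝ,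
      -- (i)  the Sylvester-type equation for P₁
      ((A + B * Th)ᵀ * w.1 + w.1 * (A + Abar + B * Thb) + Cᵀ * P * (C + Cbar) + Q
          - P * B * Thb + Thᵀ * (Dᵀ * P * C + Dᵀ * P * Cbar + S) = 0) ∧
      -- (ii) the equation for p
      ((A + Abar + B * Thb)ᵀ.mulVec w.2.1
          + (C + Cbar + D * Thb)ᵀ.mulVec (P.mulVec sig)
          + Thbᵀ.mulVec rv + Pi0.mulVec b + qv = 0) ∧
      -- (iii) the equation for p₁, with θ* := -(R + DᵀPD)⁻¹(Bᵀp + DᵀPσ + r)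
      ((A + B * Th)ᵀ.mulVec w.2.2.1 + P.mulVec b + Cᵀ.mulVec (P.mulVec sig) + qv
          + (w.1 - P).mulVec
              (B.mulVec (-((R + Dᵀ * P * D)⁻¹.mulVec
                  (Bᵀ.mulVec w.2.1 + Dᵀ.mulVec (P.mulVec sig) + rv))) + b)
          + Thbᵀ.mulVec (Dᵀ.mulVec (P.mulVec sig) + rv) = 0) ∧
      -- (iv) the value of c₀
      (w.2.2.2 = 2 * (w.2.1 ⬝ᵥ b) + sig ⬝ᵥ P.mulVec sig
          - (Bᵀ.mulVec w.2.1 + Dᵀ.mulVec (P.mulVec sig) + rv) ⬝ᵥ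
              ((R + Dᵀ * P * D)⁻¹.mulVec
                (Bᵀ.mulVec w.2.1 + Dᵀ.mulVec (P.mulVec sig) + rv))) := by
  refine existsUnique_prod_of_existsUnique ?_ fun P₁ _ => ?_
  · refine (hH1.sylvesterMap_transpose_bijective hH2).existsUnique_eq_zero_of_eq_add fun X => ?_
    simp only [sylvesterMap_apply, Matrix.mul_zero, Matrix.zero_mul, add_zero, zero_add]
    abel
  refine existsUnique_prod_of_existsUnique ?_ fun p _ => ?_
  · refine hH2.mulVec_transpose_bijective.existsUnique_eq_zero_of_eq_add fun x => ?_
    simp only [mulVec_zero, zero_add]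
    abel
  refine existsUnique_prod_of_existsUnique ?_ fun p₁ _ => existsUnique_eq
  refine hH1.mulVec_transpose_bijective.existsUnique_eq_zero_of_eq_add fun x => ?_
  simp only [mulVec_zero, zero_add]
  abel

/-- given symmetric `P`, `Π` with `R + DᵀPD` invertible, the feedback
matrices `Θ* = -(R + DᵀPD)⁻¹(BᵀP + DᵀPC + S)` and
`Θ̄* = -(R + DᵀPD)⁻¹(BᵀΠ + DᵀP(C + C̄) + S)`, and assuming `A + BΘ*` and
`A + Ā + BΘ̄*` Hurwitz, there exist a unique matrix `P₁`, unique vectors `p, p₁` and a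
unique real `c₀` solving the four linear equations (i)–(iv). -/
theorem linear_system_unique_solution {n m : ℕ} (hn : 0 < n) (hm : 0 < m)
    (A Abar C Cbar Q Qbar : Matrix (Fin n) (Fin n) ℝ)
    (B D : Matrix (Fin n) (Fin m) ℝ)
    (S : Matrix (Fin m) (Fin n) ℝ) (R : Matrix (Fin m) (Fin m) ℝ)
    (b sig qv : Fin n → ℝ) (rv : Fin m → ℝ)
    (hQ : Q.IsSymm) (hQbar : Qbar.IsSymm) (hR : R.IsSymm)
    (P Pi0 : Matrix (Fin n) (Fin n) ℝ) (hP : P.IsSymm) (hPi0 : Pi0.IsSymm)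
    (hinv : IsUnit (R + Dᵀ * P * D))
    (Th Thb : Matrix (Fin m) (Fin n) ℝ)
    (hTh : Th = -((R + Dᵀ * P * D)⁻¹ * (Bᵀ * P + Dᵀ * P * C + S)))
    (hThb : Thb = -((R + Dᵀ * P * D)⁻¹ * (Bᵀ * Pi0 + Dᵀ * P * (C + Cbar) + S)))
    (hH1 : IsHurwitz (A + B * Th)) (hH2 : IsHurwitz (A + Abar + B * Thb)) :
    ∃! w : Matrix (Fin n) (Fin n) ℝ × (Fin n → ℝ) × (Fin n → ℝ) × ℝ,
      -- (i)  the Sylvester-type equation for P₁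
      ((A + B * Th)ᵀ * w.1 + w.1 * (A + Abar + B * Thb) + Cᵀ * P * (C + Cbar) + Q
          - P * B * Thb + Thᵀ * (Dᵀ * P * C + Dᵀ * P * Cbar + S) = 0) ∧
      -- (ii) the equation for p
      ((A + Abar + B * Thb)ᵀ.mulVec w.2.1
          + (C + Cbar + D * Thb)ᵀ.mulVec (P.mulVec sig)
          + Thbᵀ.mulVec rv + Pi0.mulVec b + qv = 0) ∧
      -- (iii) the equation for p₁, with θ* := -(R + DᵀPD)⁻¹(Bᵀp + DᵀPσ + r)
      ((A + B * Th)ᵀ.mulVec w.2.2.1 + P.mulVec b + Cᵀ.mulVec (P.mulVec sig) + qv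
          + (w.1 - P).mulVec
              (B.mulVec (-((R + Dᵀ * P * D)⁻¹.mulVec
                  (Bᵀ.mulVec w.2.1 + Dᵀ.mulVec (P.mulVec sig) + rv))) + b)
          + Thbᵀ.mulVec (Dᵀ.mulVec (P.mulVec sig) + rv) = 0) ∧
      -- (iv) the value of c₀
      (w.2.2.2 = 2 * (w.2.1 ⬝ᵥ b) + sig ⬝ᵥ P.mulVec sig
          - (Bᵀ.mulVec w.2.1 + Dᵀ.mulVec (P.mulVec sig) + rv) ⬝ᵥ
              ((R + Dᵀ * P * D)⁻¹.mulVec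
                (Bᵀ.mulVec w.2.1 + Dᵀ.mulVec (P.mulVec sig) + rv))) :=
  linear_system_unique_solution_general A Abar C Cbar Q B D S R b sig qv rv P Pi0 Th Thb hH1 hH2
end

section
/- Let T, δ, K₀, λ > 0. Suppose P, Π : [0,T] → (symmetric n×n real matrices) and symmetric n×n real matrices P∞, Π∞ satisfy, for all t ∈ [0,T]: ‖P(t) − P∞‖ ≤ K₀ e^{−λ(T−t)}, ‖Π(t) − Π∞‖ ≤ K₀ e^{−λ(T−t)}, R + DᵀP(t)D ⪰ δI_m, and R + DᵀP∞D ⪰ δI_m. Define Θ̄_T(t) = −(R + DᵀP(t)D)⁻¹(BᵀΠ(t) + DᵀP(t)(C + C̄) + S) and Θ̄∞ = −(R + DᵀP∞D)⁻¹(BᵀΠ∞ + DᵀP∞(C + C̄) + S). Then there exists a constant K > 0, depending only on B, C, C̄, D, S, R, δ, K₀, ‖P∞‖ and ‖Π∞‖ but not on T, such that ‖Θ̄_T(t) − Θ̄∞‖ ≤ K e^{−λ(T−t)} for all t ∈ [0,T]. -/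
open Matrix

/-- Frobenius norm of a real matrix. -/
noncomputable def frobNorm {k l : ℕ} (M : Matrix (Fin k) (Fin l) ℝ) : ℝ :=
  Real.sqrt (∑ i, ∑ j, (M i j) ^ 2)

/-!
Up to sign, the gain is `A(P)⁻¹ M(P, Π)` with `A` and `M` affine in `(P, Π)`.
Coercivity `A ⪰ δ I` bounds `‖A⁻¹‖ ≤ √m / δ` uniformly, and the identity
`A₁⁻¹ M₁ - A₂⁻¹ M₂ = A₁⁻¹ (M₁ - M₂ - (A₁ - A₂) A₂⁻¹ M₂)` then makes the gain Lipschitz in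
`(P, Π)` at `(P∞, Π∞)`, with a constant built from `B, C + C̄, D, δ, m` and `M(P∞, Π∞)` only.
The exponential bounds on `P - P∞` and `Π - Π∞` therefore transfer to the gains.
-/

attribute [local instance] Matrix.frobeniusSeminormedAddCommGroup
  Matrix.frobeniusNormedAddCommGroup

namespace Matrix

variable {ι κ : Type*}

lemma frobenius_norm_eq_sqrt_sum_sq [Fintype ι] [Fintype κ] (M : Matrix ι κ ℝ) :
    ‖M‖ = √(∑ i, ∑ j, M i j ^ 2) := by
  simp_rw [frobenius_norm_def, Real.sqrt_eq_rpow, Real.norm_eq_abs, Real.rpow_two, sq_abs]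

lemma frobenius_norm_mul_mul_le {ι' κ' : Type*} [Fintype ι] [Fintype κ] [Fintype ι']
    [Fintype κ'] (X : Matrix ι' ι ℝ) (Y : Matrix ι κ ℝ) (Z : Matrix κ κ' ℝ) :
    ‖X * Y * Z‖ ≤ ‖X‖ * ‖Y‖ * ‖Z‖ :=
  (frobenius_norm_mul _ _).trans <| by gcongr; exact frobenius_norm_mul _ _

lemma PosSemidef.posDef_of_sub_smul_one [DecidableEq ι] {A : Matrix ι ι ℝ} {δ : ℝ}
    (hδ : 0 < δ) (hA : (A - δ • 1).PosSemidef) : A.PosDef := by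
  simpa using PosDef.posSemidef_add hA (PosDef.one.smul hδ)

section Coercive

variable [Fintype ι] [DecidableEq ι] {A : Matrix ι ι ℝ} {δ : ℝ}

lemma PosSemidef.smul_dotProduct_self_le (hA : (A - δ • 1).PosSemidef) (x : ι → ℝ) :
    δ * (x ⬝ᵥ x) ≤ x ⬝ᵥ A *ᵥ x := by
  simpa [sub_mulVec, smul_mulVec, dotProduct_smul] using hA.dotProduct_mulVec_nonneg x

/-- Column `j` of `A⁻¹` is the solution `x` of `A x = eⱼ`, so coercivity gives
`δ ‖x‖² ≤ xᵀ A x = xⱼ ≤ ‖x‖`. -/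
lemma PosSemidef.sum_sq_inv_apply_le (hδ : 0 < δ) (hA : (A - δ • 1).PosSemidef) (j : ι) :
    ∑ i, A⁻¹ i j ^ 2 ≤ (δ⁻¹) ^ 2 := by
  set x : ι → ℝ := fun i => A⁻¹ i j
  have hunit : IsUnit A.det := (hA.posDef_of_sub_smul_one hδ).det_pos.ne'.isUnit
  have hAx : A *ᵥ x = Pi.single j 1 := by
    ext i
    simpa [x, mul_apply, mulVec, dotProduct, one_apply, Pi.single_apply, eq_comm]
      using congrFun (congrFun (mul_nonsing_inv A hunit) i) j
  have hcoer : δ * ∑ i, x i ^ 2 ≤ x j := by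
    have h := hA.smul_dotProduct_self_le x
    rw [hAx, dotProduct_single, mul_one] at h
    simpa only [dotProduct, sq] using h
  have hxj : x j ^ 2 ≤ ∑ i, x i ^ 2 :=
    Finset.single_le_sum (fun i _ => sq_nonneg (x i)) (Finset.mem_univ j)
  have hsum : 0 ≤ ∑ i, x i ^ 2 := Finset.sum_nonneg fun i _ => sq_nonneg _
  have hsq : (δ * ∑ i, x i ^ 2) ^ 2 ≤ ∑ i, x i ^ 2 :=
    (pow_le_pow_left₀ (by positivity) hcoer 2).trans hxj
  change ∑ i, x i ^ 2 ≤ _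
  rw [inv_pow, ← one_div, le_div_iff₀ (by positivity)]
  nlinarith [mul_le_mul_of_nonneg_right hsq (sq_nonneg δ)]

lemma PosSemidef.norm_inv_le (hδ : 0 < δ) (hA : (A - δ • 1).PosSemidef) :
    ‖A⁻¹‖ ≤ √(Fintype.card ι) / δ := by
  have hsum : ∑ j, ∑ i, A⁻¹ i j ^ 2 ≤ Fintype.card ι * (δ⁻¹) ^ 2 := by
    simpa using Finset.sum_le_sum fun j (_ : j ∈ Finset.univ) => hA.sum_sq_inv_apply_le hδ j
  calc ‖A⁻¹‖ ≤ √(Fintype.card ι * (δ⁻¹) ^ 2) := by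
        rw [frobenius_norm_eq_sqrt_sum_sq, Finset.sum_comm]
        exact Real.sqrt_le_sqrt hsum
    _ = √(Fintype.card ι) / δ := by
        rw [Real.sqrt_mul (Nat.cast_nonneg _), Real.sqrt_sq (by positivity), div_eq_mul_inv]

end Coercive

section Perturbation

variable [Fintype ι] [DecidableEq ι]

lemma inv_mul_sub_inv_mul {α : Type*} [CommRing α] {A₁ A₂ : Matrix ι ι α}
    (h₁ : IsUnit A₁.det) (h₂ : IsUnit A₂.det) (M₁ M₂ : Matrix ι κ α) :
    A₁⁻¹ * M₁ - A₂⁻¹ * M₂ = A₁⁻¹ * (M₁ - M₂ - (A₁ - A₂) * (A₂⁻¹ * M₂)) := by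
  rw [Matrix.sub_mul, ← Matrix.mul_assoc A₂, mul_nonsing_inv _ h₂, Matrix.one_mul,
    Matrix.mul_sub, Matrix.mul_sub, Matrix.mul_sub, ← Matrix.mul_assoc A₁⁻¹ A₁,
    nonsing_inv_mul _ h₁, Matrix.one_mul]
  abel

lemma norm_inv_mul_sub_inv_mul_le [Fintype κ] {A₁ A₂ : Matrix ι ι ℝ}
    (h₁ : IsUnit A₁.det) (h₂ : IsUnit A₂.det)
    {M₁ M₂ : Matrix ι κ ℝ} {a : ℝ} (ha₁ : ‖A₁⁻¹‖ ≤ a) (ha₂ : ‖A₂⁻¹‖ ≤ a) :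
    ‖A₁⁻¹ * M₁ - A₂⁻¹ * M₂‖ ≤ a * (‖M₁ - M₂‖ + ‖A₁ - A₂‖ * (a * ‖M₂‖)) := by
  have ha : 0 ≤ a := (norm_nonneg _).trans ha₁
  rw [inv_mul_sub_inv_mul h₁ h₂]
  refine (frobenius_norm_mul _ _).trans ?_
  gcongr
  refine (norm_sub_le _ _).trans ?_
  gcongr
  refine (frobenius_norm_mul _ _).trans ?_
  gcongr
  exact (frobenius_norm_mul _ _).trans <| by gcongr

end Perturbation

end Matrix

section FeedbackGain

variable {ι κ : Type*} [Fintype ι] [Fintype κ] [DecidableEq ι]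

/-- `Q` stands for the paper's `Π` and `C` for `C + C̄`. -/
noncomputable def feedbackGain (R : Matrix ι ι ℝ) (B D : Matrix κ ι ℝ) (C : Matrix κ κ ℝ)
    (S : Matrix ι κ ℝ) (P Q : Matrix κ κ ℝ) : Matrix ι κ ℝ :=
  -((R + Dᵀ * P * D)⁻¹ * (Bᵀ * Q + Dᵀ * P * C + S))

lemma norm_feedbackGain_sub_le {R : Matrix ι ι ℝ} {B D : Matrix κ ι ℝ} {C : Matrix κ κ ℝ}
    {S : Matrix ι κ ℝ} {P Q P' Q' : Matrix κ κ ℝ} {δ ε : ℝ} (hδ : 0 < δ)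
    (hA : (R + Dᵀ * P * D - δ • 1).PosSemidef) (hA' : (R + Dᵀ * P' * D - δ • 1).PosSemidef)
    (hP : ‖P - P'‖ ≤ ε) (hQ : ‖Q - Q'‖ ≤ ε) :
    ‖feedbackGain R B D C S P Q - feedbackGain R B D C S P' Q'‖ ≤
      √(Fintype.card ι) / δ * (‖B‖ + ‖D‖ * ‖C‖ +
        ‖D‖ * ‖D‖ * (√(Fintype.card ι) / δ * ‖Bᵀ * Q' + Dᵀ * P' * C + S‖)) * ε := by
  set a := √(Fintype.card ι) / δ
  have hMdiff : ‖(Bᵀ * Q + Dᵀ * P * C + S) - (Bᵀ * Q' + Dᵀ * P' * C + S)‖ ≤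
      ‖B‖ * ε + ‖D‖ * ε * ‖C‖ := by
    rw [show (Bᵀ * Q + Dᵀ * P * C + S) - (Bᵀ * Q' + Dᵀ * P' * C + S) =
        Bᵀ * (Q - Q') + Dᵀ * (P - P') * C by simp only [Matrix.mul_sub, Matrix.sub_mul]; abel]
    refine (norm_add_le _ _).trans (add_le_add ?_ ?_)
    · exact (frobenius_norm_mul _ _).trans (by rw [frobenius_norm_transpose]; gcongr)
    · exact (frobenius_norm_mul_mul_le _ _ _).trans (by rw [frobenius_norm_transpose]; gcongr)
  have hAdiff : ‖(R + Dᵀ * P * D) - (R + Dᵀ * P' * D)‖ ≤ ‖D‖ * ε * ‖D‖ := by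
    rw [add_sub_add_left_eq_sub, ← Matrix.sub_mul, ← Matrix.mul_sub]
    exact (frobenius_norm_mul_mul_le _ _ _).trans (by rw [frobenius_norm_transpose]; gcongr)
  rw [feedbackGain, feedbackGain, neg_sub_neg, norm_sub_rev]
  calc _ ≤ a * (‖(Bᵀ * Q + Dᵀ * P * C + S) - (Bᵀ * Q' + Dᵀ * P' * C + S)‖ +
        ‖(R + Dᵀ * P * D) - (R + Dᵀ * P' * D)‖ * (a * ‖Bᵀ * Q' + Dᵀ * P' * C + S‖)) :=
        norm_inv_mul_sub_inv_mul_le (hA.posDef_of_sub_smul_one hδ).det_pos.ne'.isUnit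
          (hA'.posDef_of_sub_smul_one hδ).det_pos.ne'.isUnit (hA.norm_inv_le hδ)
          (hA'.norm_inv_le hδ)
    _ ≤ a * (‖B‖ * ε + ‖D‖ * ε * ‖C‖ + ‖D‖ * ε * ‖D‖ * (a * ‖Bᵀ * Q' + Dᵀ * P' * C + S‖)) := by
        gcongr
    _ = _ := by ring

end FeedbackGain

lemma frobNorm_eq_norm {k l : ℕ} (M : Matrix (Fin k) (Fin l) ℝ) : frobNorm M = ‖M‖ :=
  (frobenius_norm_eq_sqrt_sum_sq M).symm

theorem mean_field_feedback_gain_convergence_general {n m : ℕ}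
    (B D : Matrix (Fin n) (Fin m) ℝ) (C Cbar : Matrix (Fin n) (Fin n) ℝ)
    (S : Matrix (Fin m) (Fin n) ℝ) (R : Matrix (Fin m) (Fin m) ℝ)
    (δ K₀ lam : ℝ) (hδ : 0 < δ)
    (Pinf Piinf : Matrix (Fin n) (Fin n) ℝ)
    (hRinf : ((R + Dᵀ * Pinf * D) - δ • (1 : Matrix (Fin m) (Fin m) ℝ)).PosSemidef) :
    ∃ K > (0:ℝ), ∀ T : ℝ, 0 < T → ∀ P Pi0 : ℝ → Matrix (Fin n) (Fin n) ℝ,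
      (∀ t ∈ Set.Icc (0:ℝ) T, (P t).IsSymm) →
      (∀ t ∈ Set.Icc (0:ℝ) T, (Pi0 t).IsSymm) →
      (∀ t ∈ Set.Icc (0:ℝ) T, frobNorm (P t - Pinf) ≤ K₀ * Real.exp (-lam * (T - t))) →
      (∀ t ∈ Set.Icc (0:ℝ) T,
        frobNorm (Pi0 t - Piinf) ≤ K₀ * Real.exp (-lam * (T - t))) →
      (∀ t ∈ Set.Icc (0:ℝ) T,
        ((R + Dᵀ * P t * D) - δ • (1 : Matrix (Fin m) (Fin m) ℝ)).PosSemidef) →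
      ∀ t ∈ Set.Icc (0:ℝ) T,
        frobNorm (-((R + Dᵀ * P t * D)⁻¹ * (Bᵀ * Pi0 t + Dᵀ * P t * (C + Cbar) + S))
            - -((R + Dᵀ * Pinf * D)⁻¹ * (Bᵀ * Piinf + Dᵀ * Pinf * (C + Cbar) + S)))
          ≤ K * Real.exp (-lam * (T - t)) := by
  obtain ⟨L, hL⟩ : ∃ L : ℝ, ∀ P Q : Matrix (Fin n) (Fin n) ℝ,
      ((R + Dᵀ * P * D) - δ • (1 : Matrix (Fin m) (Fin m) ℝ)).PosSemidef → ∀ ε : ℝ,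
      ‖P - Pinf‖ ≤ ε → ‖Q - Piinf‖ ≤ ε →
      ‖feedbackGain R B D (C + Cbar) S P Q - feedbackGain R B D (C + Cbar) S Pinf Piinf‖ ≤
        L * ε :=
    ⟨_, fun P Q hA ε => norm_feedbackGain_sub_le hδ hA hRinf⟩
  refine ⟨max (K₀ * L) 1, lt_max_of_lt_right one_pos,
    fun T _ P Q _ _ hP hQ hA t ht => ?_⟩
  simp only [frobNorm_eq_norm] at hP hQ ⊢
  calc ‖feedbackGain R B D (C + Cbar) S (P t) (Q t) - feedbackGain R B D (C + Cbar) S Pinf Piinf‖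
      ≤ L * (K₀ * Real.exp (-lam * (T - t))) := hL _ _ (hA t ht) _ (hP t ht) (hQ t ht)
    _ = K₀ * L * Real.exp (-lam * (T - t)) := by ring
    _ ≤ max (K₀ * L) 1 * Real.exp (-lam * (T - t)) := by gcongr; exact le_max_left _ _

/-- exponential convergence of `P(t)` to `P∞` and of `Π(t)` to `Π∞`,
together with uniform coercivity of `R + DᵀP(t)D` and `R + DᵀP∞D`, implies exponential
convergence of the mean-field feedback gains `Θ̄_T(t)` to `Θ̄∞`, with a constant
independent of `T`. -/
theorem mean_field_feedback_gain_convergence {n m : ℕ} (hn : 0 < n) (hm : 0 < m)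
    (B D : Matrix (Fin n) (Fin m) ℝ) (C Cbar : Matrix (Fin n) (Fin n) ℝ)
    (S : Matrix (Fin m) (Fin n) ℝ) (R : Matrix (Fin m) (Fin m) ℝ) (hR : R.IsSymm)
    (δ K₀ lam : ℝ) (hδ : 0 < δ) (hK₀ : 0 < K₀) (hlam : 0 < lam)
    (Pinf Piinf : Matrix (Fin n) (Fin n) ℝ)
    (hPinf : Pinf.IsSymm) (hPiinf : Piinf.IsSymm)
    (hRinf : ((R + Dᵀ * Pinf * D) - δ • (1 : Matrix (Fin m) (Fin m) ℝ)).PosSemidef) :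
    ∃ K > (0:ℝ), ∀ T : ℝ, 0 < T → ∀ P Pi0 : ℝ → Matrix (Fin n) (Fin n) ℝ,
      (∀ t ∈ Set.Icc (0:ℝ) T, (P t).IsSymm) →
      (∀ t ∈ Set.Icc (0:ℝ) T, (Pi0 t).IsSymm) →
      (∀ t ∈ Set.Icc (0:ℝ) T, frobNorm (P t - Pinf) ≤ K₀ * Real.exp (-lam * (T - t))) →
      (∀ t ∈ Set.Icc (0:ℝ) T,
        frobNorm (Pi0 t - Piinf) ≤ K₀ * Real.exp (-lam * (T - t))) →
      (∀ t ∈ Set.Icc (0:ℝ) T,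
        ((R + Dᵀ * P t * D) - δ • (1 : Matrix (Fin m) (Fin m) ℝ)).PosSemidef) →
      ∀ t ∈ Set.Icc (0:ℝ) T,
        frobNorm (-((R + Dᵀ * P t * D)⁻¹ * (Bᵀ * Pi0 t + Dᵀ * P t * (C + Cbar) + S))
            - -((R + Dᵀ * Pinf * D)⁻¹ * (Bᵀ * Piinf + Dᵀ * Pinf * (C + Cbar) + S)))
          ≤ K * Real.exp (-lam * (T - t)) :=
  mean_field_feedback_gain_convergence_general B D C Cbar S R δ K₀ lam hδ Pinf Piinf hRinf
end

section
/- Let T, K, K₁, β, λ > 0, define g(t) = K₁(−β/2 + K e^{−λ(T−t)}) for t ∈ [0,T], and let V : [0,T] → ℝ be differentiable with V(t) ≥ 0 and V′(t) ≤ g(t) V(t) + K(e^{−λt} + e^{−λ(T−t)}) for all t ∈ [0,T]. Then V(t) ≤ V(0) exp(∫₀ᵗ g(r) dr) + ∫₀ᵗ exp(∫ₛᵗ g(r) dr) · K(e^{−λs} + e^{−λ(T−s)}) ds for all t ∈ [0,T]; consequently there exist constants K′ > 0 and λ′ > 0, depending only on V(0), K, K₁, β, λ (and not on T), such that V(t)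 ≤ K′(e^{−λ′t} + e^{−λ′(T−t)}) for all t ∈ [0,T]. -/
/-!
Multiplying by the integrating factor `exp (-∫ₐᵗ g)` turns `V' ≤ g V + h` into the monotonicity
of `e^{-G} V - ∫ e^{-G} h`, which is the variation-of-constants bound. For the turnpike
coefficient `g`, `∫ₛᵗ g ≤ K₁K/λ - μ (t - s)` with `μ = K₁β/2`, so the kernel `exp (∫ₛᵗ g)` decays
exponentially, uniformly in `T`; convolving it with the two-sided forcing
`e^{-λs} + e^{-λ(T-s)}` returns a profile of the same shape with rate `ν = min μ λ / 2`.
-/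

/-- The function `g(t) = K₁(-β/2 + K e^{-λ(T-t)})`. -/
noncomputable def gFun (K K₁ β lam T t : ℝ) : ℝ :=
  K₁ * (-β / 2 + K * Real.exp (-lam * (T - t)))

open Real Set intervalIntegral

/-- The solution of `x' = g x + h`, `x a = x₀`, by variation of constants. -/
noncomputable def linearGronwallBound (g h : ℝ → ℝ) (a x₀ t : ℝ) : ℝ :=
  x₀ * exp (∫ r in a..t, g r) + ∫ s in a..t, exp (∫ r in s..t, g r) * h s

noncomputable def turnpikeProfile (c T t : ℝ) : ℝ :=
  exp (-c * t) + exp (-c * (T - t))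

section LinearGronwall

variable {g h : ℝ → ℝ}

theorem exp_integral_mul_exp_neg_integral (hg : Continuous g) (a s t : ℝ) :
    exp (∫ r in a..t, g r) * exp (-∫ r in a..s, g r) = exp (∫ r in s..t, g r) := by
  rw [← exp_add, ← sub_eq_add_neg,
    integral_interval_sub_left (hg.intervalIntegrable a t) (hg.intervalIntegrable a s)]

theorem continuous_integral_lower (hg : Continuous g) (t : ℝ) :
    Continuous fun s => ∫ r in s..t, g r := by
  refine (continuous_primitive (μ := MeasureTheory.volume) (fun a b => hg.intervalIntegrable a b)
    t).neg.congr fun s => ?_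
  exact (integral_symm (μ := MeasureTheory.volume) (f := g) t s).symm

theorem le_linearGronwallBound {V V' : ℝ → ℝ} {a b : ℝ} (hg : Continuous g) (hh : Continuous h)
    (hV : ContinuousOn V (Icc a b)) (hV' : ∀ t ∈ Ioo a b, HasDerivAt V (V' t) t)
    (hle : ∀ t ∈ Ioo a b, V' t ≤ g t * V t + h t) :
    ∀ t ∈ Icc a b, V t ≤ linearGronwallBound g h a (V a) t := by
  set G := fun t => ∫ r in a..t, g r
  have hG : ∀ t, HasDerivAt G (g t) t := fun t => (hg.integral_hasStrictDerivAt a t).hasDerivAt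
  have hGc : Continuous G := continuous_primitive (fun a b => hg.intervalIntegrable a b) a
  have hEh : Continuous fun s => exp (-G s) * h s := by fun_prop
  -- `F' = e^{-G} (V' - g V - h) ≤ 0`, so `F` is antitone.
  set F := fun t => exp (-G t) * V t - ∫ s in a..t, exp (-G s) * h s
  have hF_anti : AntitoneOn F (Icc a b) := by
    refine antitoneOn_of_hasDerivWithinAt_nonpos (convex_Icc a b) ?_
      (f' := fun t => exp (-G t) * (V' t - g t * V t - h t)) ?_ ?_
    · exact (hGc.neg.rexp.continuousOn.mul hV).sub
        (continuous_primitive (fun a b => hEh.intervalIntegrable a b) a).continuousOn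
    · intro t ht
      rw [interior_Icc] at ht
      refine HasDerivAt.hasDerivWithinAt ?_
      exact (((hG t).neg.exp.mul (hV' t ht)).sub (hEh.integral_hasStrictDerivAt a t).hasDerivAt)
        |>.congr_deriv (by simp only [Pi.neg_apply]; ring)
    · intro t ht
      rw [interior_Icc] at ht
      exact mul_nonpos_of_nonneg_of_nonpos (exp_pos _).le (by linarith [hle t ht])
  intro t ht
  have hFt : F t ≤ F a := hF_anti (left_mem_Icc.2 (ht.1.trans ht.2)) ht ht.1
  have hFa : F a = V a := by simp [F, G]
  calc V t = exp (G t) * (exp (-G t) * V t) := by rw [← mul_assoc, ← exp_add]; simp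
    _ ≤ exp (G t) * (V a + ∫ s in a..t, exp (-G s) * h s) := by
        gcongr; linarith [hFt, hFa]
    _ = linearGronwallBound g h a (V a) t := by
        rw [mul_add, ← integral_const_mul]
        simp only [linearGronwallBound, ← mul_assoc, exp_integral_mul_exp_neg_integral hg, G]
        ring

theorem linearGronwallBound_le {C μ x₀ a t : ℝ} (hg : Continuous g) (hh : Continuous h)
    (hx₀ : 0 ≤ x₀) (hh_nonneg : ∀ s, 0 ≤ h s) (hat : a ≤ t)
    (hdecay : ∀ s ∈ Icc a t, exp (∫ r in s..t, g r) ≤ C * exp (-μ * (t - s))) :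
    linearGronwallBound g h a x₀ t
      ≤ C * (x₀ * exp (-μ * (t - a)) + ∫ s in a..t, exp (-μ * (t - s)) * h s) := by
  have hint : ∫ s in a..t, exp (∫ r in s..t, g r) * h s
      ≤ ∫ s in a..t, C * (exp (-μ * (t - s)) * h s) := by
    refine integral_mono_on hat ?_ ?_ fun s hs => ?_
    · have hlower := continuous_integral_lower hg t
      exact Continuous.intervalIntegrable (by fun_prop) a t
    · exact Continuous.intervalIntegrable (by fun_prop) a t
    · rw [← mul_assoc]; exact mul_le_mul_of_nonneg_right (hdecay s hs) (hh_nonneg s)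
  rw [integral_const_mul] at hint
  have hx : x₀ * exp (∫ r in a..t, g r) ≤ x₀ * (C * exp (-μ * (t - a))) :=
    mul_le_mul_of_nonneg_left (hdecay a (left_mem_Icc.2 hat)) hx₀
  unfold linearGronwallBound
  linarith

end LinearGronwall

theorem integral_exp_neg_mul_sub_le {c : ℝ} (hc : 0 < c) (t : ℝ) :
    ∫ s in (0:ℝ)..t, exp (-c * (t - s)) ≤ 1 / c := by
  have hderiv : ∀ s ∈ uIcc (0:ℝ) t,
      HasDerivAt (fun s => exp (-c * (t - s)) / c) (exp (-c * (t - s))) s := by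
    intro s _
    exact ((((hasDerivAt_id' s).const_sub t).const_mul (-c)).exp.div_const c).congr_deriv
      (by field_simp)
  rw [integral_eq_sub_of_hasDerivAt hderiv (Continuous.intervalIntegrable (by fun_prop) 0 t)]
  have hpos : 0 < exp (-c * (t - 0)) / c := by positivity
  simp only [sub_self, mul_zero, exp_zero] at hpos ⊢
  linarith

/-- Halving the rates leaves a factor `e^{-ν(t-s)}` that is integrable uniformly in `t` and `T`. -/
theorem exp_mul_turnpikeProfile_le {μ ν lam T s t : ℝ} (hν : 0 ≤ ν) (hνμ : 2 * ν ≤ μ)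
    (hνlam : 2 * ν ≤ lam) (hs : 0 ≤ s) (hst : s ≤ t) (htT : t ≤ T) :
    exp (-μ * (t - s)) * turnpikeProfile lam T s
      ≤ exp (-ν * (t - s)) * turnpikeProfile ν T t := by
  simp only [turnpikeProfile, mul_add, ← exp_add]
  gcongr exp ?_ + exp ?_ <;> nlinarith

theorem integral_exp_mul_turnpikeProfile_le {μ ν lam T t : ℝ} (hν : 0 < ν) (hνμ : 2 * ν ≤ μ)
    (hνlam : 2 * ν ≤ lam) (ht : 0 ≤ t) (htT : t ≤ T) :
    ∫ s in (0:ℝ)..t, exp (-μ * (t - s)) * turnpikeProfile lam T s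
      ≤ turnpikeProfile ν T t / ν := by
  have hP : Continuous (turnpikeProfile lam T) := by unfold turnpikeProfile; fun_prop
  have hP_nonneg : 0 ≤ turnpikeProfile ν T t := by unfold turnpikeProfile; positivity
  calc ∫ s in (0:ℝ)..t, exp (-μ * (t - s)) * turnpikeProfile lam T s
      ≤ ∫ s in (0:ℝ)..t, exp (-ν * (t - s)) * turnpikeProfile ν T t :=
        integral_mono_on ht (Continuous.intervalIntegrable (by fun_prop) 0 t)
          (Continuous.intervalIntegrable (by fun_prop) 0 t)
          fun s hs => exp_mul_turnpikeProfile_le hν.le hνμ hνlam hs.1 hs.2 htT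
    _ = (∫ s in (0:ℝ)..t, exp (-ν * (t - s))) * turnpikeProfile ν T t := integral_mul_const _ _
    _ ≤ 1 / ν * turnpikeProfile ν T t := by gcongr; exact integral_exp_neg_mul_sub_le hν t
    _ = turnpikeProfile ν T t / ν := one_div_mul_eq_div _ _

section gFun

variable {K K₁ β lam T : ℝ}

theorem continuous_gFun : Continuous (gFun K K₁ β lam T) := by
  unfold gFun; fun_prop

theorem integral_gFun (hlam : lam ≠ 0) (s t : ℝ) :
    ∫ r in s..t, gFun K K₁ β lam T r
      = K₁ * (-β / 2 * (t - s) + K / lam * (exp (-lam * (T - t)) - exp (-lam * (T - s)))) := by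
  have hderiv : ∀ r, HasDerivAt (fun r => K₁ * (-β / 2 * r + K / lam * exp (-lam * (T - r))))
      (gFun K K₁ β lam T r) r := fun r => by
    have hexp := (((hasDerivAt_id' r).const_sub T).const_mul (-lam)).exp
    exact ((((hasDerivAt_id' r).const_mul (-β / 2)).add (hexp.const_mul (K / lam))).const_mul
      K₁).congr_deriv (by unfold gFun; field_simp)
  rw [integral_eq_sub_of_hasDerivAt (fun r _ => hderiv r)
    (continuous_gFun.intervalIntegrable s t)]
  ring

/-- The growth `K e^{-λ(T-t)}` in `g` integrates to at most `K/λ`, so it costs only the constant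
factor `e^{K₁K/λ}`, uniformly in `T`. -/
theorem exp_integral_gFun_le (hK : 0 ≤ K) (hK₁ : 0 ≤ K₁) (hlam : 0 < lam) {s t : ℝ}
    (htT : t ≤ T) :
    exp (∫ r in s..t, gFun K K₁ β lam T r)
      ≤ exp (K₁ * K / lam) * exp (-(K₁ * β / 2) * (t - s)) := by
  rw [integral_gFun hlam.ne', ← exp_add, exp_le_exp]
  have h_le_one : exp (-lam * (T - t)) ≤ 1 := exp_le_one_iff.2 (by nlinarith)
  have h_pos : 0 < exp (-lam * (T - s)) := exp_pos _
  have hgrowth : K / lam * (exp (-lam * (T - t)) - exp (-lam * (T - s))) ≤ K / lam :=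
    mul_le_of_le_one_right (by positivity) (by linarith)
  rw [mul_div_assoc]
  linarith [mul_le_mul_of_nonneg_left hgrowth hK₁]

end gFun

/-- comparison/Grönwall step.  If `V ≥ 0` is differentiable on `[0, T]`
with `V' ≤ g V + K(e^{-λt} + e^{-λ(T-t)})`, then
`V(t) ≤ V(0) exp(∫₀ᵗ g) + ∫₀ᵗ exp(∫ₛᵗ g)·K(e^{-λs} + e^{-λ(T-s)}) ds`; consequently
`V(t) ≤ K'(e^{-λ't} + e^{-λ'(T-t)})` with `K', λ'` depending only on `V(0)`, `K`, `K₁`,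
`β`, `λ` and not on `T`. -/
theorem gronwall_comparison (K K₁ β lam v₀ : ℝ)
    (hK : 0 < K) (hK₁ : 0 < K₁) (hβ : 0 < β) (hlam : 0 < lam) :
    ∃ K' > (0:ℝ), ∃ lam' > (0:ℝ), ∀ T : ℝ, 0 < T → ∀ V V' : ℝ → ℝ,
      V 0 = v₀ →
      (∀ t ∈ Set.Icc (0:ℝ) T, HasDerivAt V (V' t) t) →
      (∀ t ∈ Set.Icc (0:ℝ) T, 0 ≤ V t) →
      (∀ t ∈ Set.Icc (0:ℝ) T,
        V' t ≤ gFun K K₁ β lam T t * V t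
          + K * (Real.exp (-lam * t) + Real.exp (-lam * (T - t)))) →
      (∀ t ∈ Set.Icc (0:ℝ) T,
        V t ≤ V 0 * Real.exp (∫ r in (0:ℝ)..t, gFun K K₁ β lam T r)
          + ∫ s in (0:ℝ)..t, Real.exp (∫ r in s..t, gFun K K₁ β lam T r)
              * (K * (Real.exp (-lam * s) + Real.exp (-lam * (T - s))))) ∧
      (∀ t ∈ Set.Icc (0:ℝ) T,
        V t ≤ K' * (Real.exp (-lam' * t) + Real.exp (-lam' * (T - t)))) := by
  set μ := K₁ * β / 2
  set ν := min μ lam / 2 with hν_def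
  set C := exp (K₁ * K / lam)
  have hμ : 0 < μ := by positivity
  have hν : 0 < ν := by positivity
  have hνμ : 2 * ν ≤ μ := by linarith [min_le_left μ lam, hν_def]
  have hνlam : 2 * ν ≤ lam := by linarith [min_le_right μ lam, hν_def]
  refine ⟨C * (|v₀| + K / ν), by positivity, ν, hν, fun T hT V V' hV0 hV hV_nonneg hV' => ?_⟩
  set h := fun s => K * turnpikeProfile lam T s
  have hh : Continuous h := by unfold h turnpikeProfile; fun_prop
  have hcomp : ∀ t ∈ Icc 0 T, V t ≤ linearGronwallBound (gFun K K₁ β lam T) h 0 (V 0) t :=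
    le_linearGronwallBound continuous_gFun hh
      (fun t ht => (hV t ht).continuousAt.continuousWithinAt)
      (fun t ht => hV t (Ioo_subset_Icc_self ht)) (fun t ht => hV' t (Ioo_subset_Icc_self ht))
  refine ⟨hcomp, fun t ht => ?_⟩
  have hinit : V 0 * exp (-μ * (t - 0)) ≤ |v₀| * turnpikeProfile ν T t := by
    rw [hV0, sub_zero]
    refine mul_le_mul (le_abs_self v₀) ?_ (exp_pos _).le (abs_nonneg _)
    exact le_add_of_le_of_nonneg (exp_le_exp.2 (by nlinarith [ht.1])) (exp_pos _).le
  have hforce : ∫ s in (0:ℝ)..t, exp (-μ * (t - s)) * h s ≤ K * (turnpikeProfile ν T t / ν) := by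
    simp only [h, mul_left_comm _ K, integral_const_mul]
    gcongr
    exact integral_exp_mul_turnpikeProfile_le hν hνμ hνlam ht.1 ht.2
  calc V t ≤ linearGronwallBound (gFun K K₁ β lam T) h 0 (V 0) t := hcomp t ht
    _ ≤ C * (V 0 * exp (-μ * (t - 0)) + ∫ s in (0:ℝ)..t, exp (-μ * (t - s)) * h s) :=
      linearGronwallBound_le continuous_gFun hh (hV_nonneg 0 ⟨le_rfl, hT.le⟩)
        (fun s => by unfold h turnpikeProfile; positivity) ht.1
        (fun s _ => exp_integral_gFun_le hK.le hK₁.le hlam ht.2)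
    _ ≤ C * (|v₀| * turnpikeProfile ν T t + K * (turnpikeProfile ν T t / ν)) := by gcongr
    _ = C * (|v₀| + K / ν) * turnpikeProfile ν T t := by ring
end
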